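/- Let G be an n×n real matrix (n ≥ 2) with positive definite symmetric part, set Q := −G⁻¹, and write Q in block form with scalar block Q₁₁, column Q_{*1} ∈ ℝⁿ⁻¹, row Q_{1*} ∈ ℝⁿ⁻¹, and (n−1)×(n−1) block Q_{**} (indices 2,…,n). Then Q_{**} is invertible with det(−Q_{**}) > 0, G₁₁ = det(G)·det(−Q_{**}) > 0, and for every r > 0 and every (l₂,…,lₙ) ∈ ℝ₊ⁿ⁻¹, the density formula ρ with kernel G satisfies G₁₁ · exp(r/G₁₁) · ρ(r, l₂, …, lₙ) = (2π)^{−(n−1)} det(−Q_{**}) ∫_{[0,2π)^{n−1}} exp( ⟨ φ_* + √r·Q_{**}^{−T}Q_{1*} , Q_{**}( φ̄_* + √r·Q_{**}^{−1}Q_{*1} ) ⟩ ) dθ₂⋯dθₙ, where φ_{*,i} := √(l_i)·e^{𝕚θ_i} for i = 2,…,n, φ̄_* is its componentwise complex conjugate, and ⟨x,y⟩ := Σᵢ xᵢyᵢ is the bilinear (unconjugated) pairing on ℂⁿ⁻¹. -/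

import Mathlib

/-!
The integrand of `ρ` depends on the phases only through the differences `θᵢ - θⱼ`, so it is a
function on the torus `(ℝ/2πℤ)ⁿ` invariant under the diagonal rotation: integrating out `θ₁`
contributes a factor `2π` and sets `θ₁ = 0`. With `θ₁ = 0` and `l₁ = r`, the exponent is the
bilinear form `φᵀ Q φ̄` of `φ = (√r, φ_*)`; expanding it in blocks and completing the square in
the `Q_{**}` block leaves the stated integrand plus the constant `r (Q₁₁ - Q_{1*} Q_{**}⁻¹ Q_{*1})`.
That Schur complement is `-1/G₁₁` because `Q (-G) = 1`, and Cramer's rule for `G = (G⁻¹)⁻¹` gives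
`G₁₁ = det G · det (-Q_{**})`.
-/

open Matrix MeasureTheory

/-- The density formula for a 1-permanental vector with kernel `G`, where `Q = −G⁻¹`. -/
noncomputable def permDensity {n : ℕ} (G : Matrix (Fin n) (Fin n) ℝ) (l : Fin n → ℝ) : ℂ :=
  (((2 * Real.pi)⁻¹ : ℝ) ^ n : ℝ) * ((G.det⁻¹ : ℝ) : ℂ) *
    ∫ θ : Fin n → ℝ in Set.univ.pi fun _ : Fin n => Set.Ico (0 : ℝ) (2 * Real.pi),
      Complex.exp (∑ i, ∑ j, ((-(G⁻¹ i j) : ℝ) : ℂ) * ((Real.sqrt (l i * l j) : ℝ) : ℂ) *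
        Complex.exp (Complex.I * (((θ i : ℝ) : ℂ) - ((θ j : ℝ) : ℂ))))

namespace Matrix

section PositiveSymmetricPart

variable {n : Type*} [Fintype n]

theorem forall_dotProduct_submatrix_mulVec_pos {m : Type*} [Fintype m] {M : Matrix n n ℝ}
    (hM : ∀ x, x ≠ 0 → 0 < x ⬝ᵥ M *ᵥ x) {e : m → n} (he : Function.Injective e) :
    ∀ x, x ≠ 0 → 0 < x ⬝ᵥ M.submatrix e e *ᵥ x := fun x hx => by
  set y : n → ℝ := Function.extend e x 0
  have hye : ∀ j, y (e j) = x j := he.extend_apply x 0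
  have sum_y : ∀ g : n → ℝ, ∑ i, y i * g i = ∑ j, x j * g (e j) := fun g =>
    (Fintype.sum_of_injective e he _ _ (fun i hi => by
      simp [y, Function.extend_apply' _ _ _ (by simpa using hi)]) fun j => by rw [hye]).symm
  have hy : y ≠ 0 := fun h0 => hx (funext fun j => by simpa [hye] using congrFun h0 (e j))
  convert hM y hy using 1
  simp only [dotProduct, mulVec, submatrix_apply, sum_y, mul_comm (M _ _)]

variable [DecidableEq n]

theorem det_ne_zero_of_forall_dotProduct_mulVec_pos {M : Matrix n n ℝ}
    (hM : ∀ x, x ≠ 0 → 0 < x ⬝ᵥ M *ᵥ x) : M.det ≠ 0 := fun h0 => by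
  obtain ⟨v, hv, hMv⟩ := exists_mulVec_eq_zero_iff.2 h0
  simpa [hMv] using hM v hv

/-- The segment from `1` to `M` stays among matrices with positive definite symmetric part, on
which `det` does not vanish; so `det M` has the sign of `det 1`. -/
theorem det_pos_of_forall_dotProduct_mulVec_pos {M : Matrix n n ℝ}
    (hM : ∀ x, x ≠ 0 → 0 < x ⬝ᵥ M *ᵥ x) : 0 < M.det := by
  set f : ℝ → ℝ := fun t => ((1 - t) • (1 : Matrix n n ℝ) + t • M).det
  have hf : Continuous f := by fun_prop
  have hne : ∀ t ∈ Set.Icc (0 : ℝ) 1, f t ≠ 0 := fun t ⟨ht0, ht1⟩ => by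
    refine det_ne_zero_of_forall_dotProduct_mulVec_pos fun x hx => ?_
    have hxx : 0 < x ⬝ᵥ x :=
      (Finset.sum_nonneg fun i _ => mul_self_nonneg (x i)).lt_of_ne'
        (dotProduct_self_eq_zero.not.2 hx)
    simp only [add_mulVec, smul_mulVec, one_mulVec, dotProduct_add, dotProduct_smul, smul_eq_mul]
    rcases ht0.eq_or_lt with rfl | ht0
    · simpa using hxx
    · nlinarith [hM x hx]
  by_contra! hle
  obtain ⟨t, ht, hft⟩ := intermediate_value_Icc' zero_le_one hf.continuousOn
    (show (0 : ℝ) ∈ Set.Icc (f 1) (f 0) by simp [f, hle])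
  exact hne t ht hft

theorem forall_dotProduct_nonsing_inv_mulVec_pos {M : Matrix n n ℝ}
    (hM : ∀ x, x ≠ 0 → 0 < x ⬝ᵥ M *ᵥ x) : ∀ x, x ≠ 0 → 0 < x ⬝ᵥ M⁻¹ *ᵥ x := fun x hx => by
  have hu : IsUnit M.det := (det_pos_of_forall_dotProduct_mulVec_pos hM).ne'.isUnit
  have hMy : M *ᵥ (M⁻¹ *ᵥ x) = x := by rw [mulVec_mulVec, mul_nonsing_inv _ hu, one_mulVec]
  have hy : M⁻¹ *ᵥ x ≠ 0 := fun h0 => hx (by rw [← hMy, h0, mulVec_zero])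
  simpa [hMy, dotProduct_comm] using hM _ hy

end PositiveSymmetricPart

theorem dotProduct_mulVec_add_smul {n R : Type*} [Fintype n] [CommSemiring R] (A : Matrix n n R)
    {w v p q : n → R} (hw : w ᵥ* A = p) (hv : A *ᵥ v = q) (a b : n → R) (s : R) :
    (a + s • w) ⬝ᵥ A *ᵥ (b + s • v) =
      a ⬝ᵥ A *ᵥ b + s * (p ⬝ᵥ b) + s * (a ⬝ᵥ q) + s * s * (w ⬝ᵥ q) := by
  simp only [mulVec_add, mulVec_smul, add_dotProduct, dotProduct_add, smul_dotProduct,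
    dotProduct_smul, dotProduct_mulVec w, hw, hv, smul_eq_mul]
  ring

section FirstIndexBlocks

variable {m : ℕ}

theorem cons_dotProduct_mulVec_cons {R : Type*} [CommSemiring R]
    (M : Matrix (Fin (m + 1)) (Fin (m + 1)) R) (a b : R) (x y : Fin m → R) :
    Fin.cons a x ⬝ᵥ M *ᵥ Fin.cons b y =
      a * M 0 0 * b + a * ((fun j => M 0 j.succ) ⬝ᵥ y) + (x ⬝ᵥ fun i => M i.succ 0) * b +
        x ⬝ᵥ M.submatrix Fin.succ Fin.succ *ᵥ y := by
  simp only [dotProduct, mulVec, Fin.sum_univ_succ, Fin.cons_zero, Fin.cons_succ,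
    submatrix_apply, mul_add, Finset.mul_sum, Finset.sum_mul, Finset.sum_add_distrib, mul_assoc]
  ring

theorem cons_dotProduct_mulVec_cons_eq_add {R : Type*} [CommRing R]
    (M : Matrix (Fin (m + 1)) (Fin (m + 1)) R) {w v : Fin m → R}
    (hw : w ᵥ* M.submatrix Fin.succ Fin.succ = fun j => M 0 j.succ)
    (hv : M.submatrix Fin.succ Fin.succ *ᵥ v = fun i => M i.succ 0) (s : R) (a b : Fin m → R) :
    Fin.cons s a ⬝ᵥ M *ᵥ Fin.cons s b =
      s * s * (M 0 0 - w ⬝ᵥ fun i => M i.succ 0) +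
        (a + s • w) ⬝ᵥ M.submatrix Fin.succ Fin.succ *ᵥ (b + s • v) := by
  rw [cons_dotProduct_mulVec_cons, dotProduct_mulVec_add_smul _ hw hv]
  ring

theorem apply_zero_zero_eq_det_mul_det_inv_submatrix {K : Type*} [Field K]
    {A : Matrix (Fin (m + 1)) (Fin (m + 1)) K} (hA : A.det ≠ 0) :
    A 0 0 = A.det * (A⁻¹.submatrix Fin.succ Fin.succ).det := by
  conv_lhs => rw [← nonsing_inv_nonsing_inv A hA.isUnit]
  rw [inv_def, smul_apply, adjugate_fin_succ_eq_det_submatrix, det_nonsing_inv,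
    Ring.inverse_eq_inv', inv_inv]
  simp

/-- With `w = A_{**}⁻ᵀ A_{0*}` this says that `B₀₀` inverts the Schur complement of `A_{**}`.
The first column `x` of `B` satisfies `A_{**} x_* = -B₀₀ A_{*0}`. -/
theorem apply_zero_zero_mul_sub_dotProduct_eq_one {R : Type*} [CommRing R]
    {A B : Matrix (Fin (m + 1)) (Fin (m + 1)) R} (hAB : A * B = 1) {w : Fin m → R}
    (hw : w ᵥ* A.submatrix Fin.succ Fin.succ = fun j => A 0 j.succ) :
    B 0 0 * (A 0 0 - w ⬝ᵥ fun i => A i.succ 0) = 1 := by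
  set x : Fin m → R := fun i => B i.succ 0
  have hrow : A 0 0 * B 0 0 + (fun j => A 0 j.succ) ⬝ᵥ x = 1 := by
    simpa [mul_apply, Fin.sum_univ_succ, dotProduct] using congrFun (congrFun hAB 0) 0
  have hrows : B 0 0 • (fun i => A i.succ 0) + A.submatrix Fin.succ Fin.succ *ᵥ x = 0 :=
    funext fun i => by
      simpa [mul_apply, Fin.sum_univ_succ, mulVec, dotProduct, mul_comm, x] using
        congrFun (congrFun hAB i.succ) 0
  have hwx : (fun j => A 0 j.succ) ⬝ᵥ x = -(B 0 0 * (w ⬝ᵥ fun i => A i.succ 0)) := by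
    rw [← hw, ← dotProduct_mulVec, eq_neg_of_add_eq_zero_right hrows, dotProduct_neg,
      dotProduct_smul, smul_eq_mul]
  rw [← hrow, hwx]
  ring

end FirstIndexBlocks

end Matrix

theorem sum_sqrt_mul_exp_cons_eq {m : ℕ} (Q : Matrix (Fin (m + 1)) (Fin (m + 1)) ℝ)
    {w v : Fin m → ℝ} (hw : w ᵥ* Q.submatrix Fin.succ Fin.succ = fun j => Q 0 j.succ)
    (hv : Q.submatrix Fin.succ Fin.succ *ᵥ v = fun i => Q i.succ 0)
    {r : ℝ} (hr : 0 ≤ r) {ls : Fin m → ℝ} (hls : ∀ i, 0 ≤ ls i) (θ : Fin m → ℝ) :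
    ∑ i, ∑ j, ((Q i j : ℝ) : ℂ) *
        ((Real.sqrt ((Fin.cons r ls : Fin (m + 1) → ℝ) i * (Fin.cons r ls : Fin (m + 1) → ℝ) j)
          : ℝ) : ℂ) *
        Complex.exp (Complex.I * (((Fin.cons 0 θ : Fin (m + 1) → ℝ) i : ℂ) -
          (Fin.cons 0 θ : Fin (m + 1) → ℝ) j)) =
      ((r * (Q 0 0 - w ⬝ᵥ fun i => Q i.succ 0) : ℝ) : ℂ) +
        ∑ i, (((Real.sqrt (ls i) : ℝ) : ℂ) * Complex.exp (Complex.I * (θ i : ℂ)) +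
            ((Real.sqrt r * w i : ℝ) : ℂ)) *
          ∑ j, ((Q i.succ j.succ : ℝ) : ℂ) *
            (((Real.sqrt (ls j) : ℝ) : ℂ) * Complex.exp (-(Complex.I * (θ j : ℂ))) +
              ((Real.sqrt r * v j : ℝ) : ℂ)) := by
  set l : Fin (m + 1) → ℝ := Fin.cons r ls
  set θ' : Fin (m + 1) → ℝ := Fin.cons 0 θ
  set φ : Fin m → ℂ := fun i => (Real.sqrt (ls i) : ℂ) * Complex.exp (Complex.I * θ i)
  set φbar : Fin m → ℂ := fun i => (Real.sqrt (ls i) : ℂ) * Complex.exp (-(Complex.I * θ i))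
  have hφ : ∀ i, (Fin.cons (Real.sqrt r : ℂ) φ : Fin (m + 1) → ℂ) i =
      Real.sqrt (l i) * Complex.exp (Complex.I * θ' i) := fun i => by
    cases i using Fin.cases <;> simp [l, θ', φ]
  have hφbar : ∀ i, (Fin.cons (Real.sqrt r : ℂ) φbar : Fin (m + 1) → ℂ) i =
      Real.sqrt (l i) * Complex.exp (-(Complex.I * θ' i)) := fun i => by
    cases i using Fin.cases <;> simp [l, θ', φbar]
  have hquad : ∑ i, ∑ j, ((Q i j : ℝ) : ℂ) * ((Real.sqrt (l i * l j) : ℝ) : ℂ) *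
      Complex.exp (Complex.I * ((θ' i : ℂ) - θ' j)) =
      Fin.cons (Real.sqrt r : ℂ) φ ⬝ᵥ
        Q.map Complex.ofRealHom *ᵥ Fin.cons (Real.sqrt r : ℂ) φbar := by
    simp only [dotProduct, mulVec, Finset.mul_sum, hφ, hφbar, map_apply]
    refine Finset.sum_congr rfl fun i _ => Finset.sum_congr rfl fun j _ => ?_
    rw [Real.sqrt_mul (show 0 ≤ l i from Fin.cases hr hls i), mul_sub, Complex.exp_sub,
      Complex.exp_neg]
    simp only [Complex.ofRealHom_eq_coe, Complex.ofReal_mul]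
    ring
  have hwc : (Complex.ofRealHom ∘ w) ᵥ* (Q.map Complex.ofRealHom).submatrix Fin.succ Fin.succ =
      fun j => Q.map Complex.ofRealHom 0 j.succ := funext fun j => by
    simpa [vecMul, dotProduct] using congrArg Complex.ofReal (congrFun hw j)
  have hvc : (Q.map Complex.ofRealHom).submatrix Fin.succ Fin.succ *ᵥ (Complex.ofRealHom ∘ v) =
      fun i => Q.map Complex.ofRealHom i.succ 0 := funext fun i => by
    simpa [mulVec, dotProduct] using congrArg Complex.ofReal (congrFun hv i)
  rw [hquad, cons_dotProduct_mulVec_cons_eq_add _ hwc hvc, ← Complex.ofReal_mul,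
    Real.mul_self_sqrt hr]
  simp only [dotProduct, mulVec, Pi.add_apply, Pi.smul_apply, Function.comp_apply, smul_eq_mul,
    submatrix_apply, map_apply, Complex.ofRealHom_eq_coe, Complex.ofReal_mul, Complex.ofReal_sub,
    Complex.ofReal_sum, φ, φbar]

namespace AddCircle

variable {T : ℝ} [Fact (0 < T)] {E : Type*} [NormedAddCommGroup E] [NormedSpace ℝ E]

theorem setIntegral_pi_Ico_eq_integral_pi {ι : Type*} [Fintype ι]
    (F : (ι → AddCircle T) → E) (hF : Continuous F) :
    ∫ θ in Set.univ.pi fun _ : ι => Set.Ico 0 T, F (fun i => θ i) =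
      ∫ u, F u ∂Measure.pi fun _ => volume := by
  have hrestrict : volume.restrict (Set.univ.pi fun _ : ι => Set.Ico 0 T) =
      Measure.pi fun _ => volume.restrict (Set.Ioc 0 (0 + T)) := by
    simp_rw [volume_pi, Measure.restrict_pi_pi, zero_add,
      Measure.restrict_congr_set Ico_ae_eq_Ioc]
  have hmp := measurePreserving_pi _ _ fun _ : ι => AddCircle.measurePreserving_mk T 0
  rw [hrestrict, ← hmp.map_eq, integral_map hmp.measurable.aemeasurable hF.aestronglyMeasurable]

/-- Fubini over the first factor; translating the other coordinates by the first one makes each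
slice independent of it. -/
theorem integral_pi_succ_eq_smul_of_diag_invariant [CompleteSpace E] {m : ℕ}
    (Φ : (Fin (m + 1) → AddCircle T) → E) (hΦ : Continuous Φ)
    (hΦ_diag : ∀ u a, Φ (u + fun _ => a) = Φ u) :
    ∫ u, Φ u ∂Measure.pi (fun _ => volume) =
      T • ∫ v, Φ (Fin.cons 0 v) ∂Measure.pi (fun _ => volume) := by
  have hmp := (measurePreserving_piFinSuccAbove
    (fun _ : Fin (m + 1) => (volume : Measure (AddCircle T))) 0).symm
  have hcons : ∀ p : AddCircle T × (Fin m → AddCircle T),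
      (MeasurableEquiv.piFinSuccAbove (fun _ => AddCircle T) 0).symm p = Fin.cons p.1 p.2 :=
    fun p => Fin.insertNth_zero' p.1 p.2
  have hslice : ∀ a : AddCircle T, ∫ v, Φ (Fin.cons a v) ∂Measure.pi (fun _ => volume) =
      ∫ v, Φ (Fin.cons 0 v) ∂Measure.pi (fun _ => volume) := fun a => by
    rw [← integral_add_right_eq_self _ fun _ => a]
    congr 1 with v
    convert hΦ_diag (Fin.cons 0 v) a using 2
    ext i
    cases i using Fin.cases <;> simp
  rw [← hmp.integral_comp', integral_prod]
  · simp only [hcons, hslice]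
    rw [integral_const, measureReal_def, AddCircle.measure_univ,
      ENNReal.toReal_ofReal (Fact.out : 0 < T).le]
  · exact (hmp.integrable_comp_emb (MeasurableEquiv.measurableEmbedding _)).2
      (hΦ.integrable_of_hasCompactSupport (.of_compactSpace _))

theorem setIntegral_pi_Ico_succ_eq_smul_of_diag_invariant [CompleteSpace E] {m : ℕ}
    (Φ : (Fin (m + 1) → AddCircle T) → E) (hΦ : Continuous Φ)
    (hΦ_diag : ∀ u a, Φ (u + fun _ => a) = Φ u) :
    ∫ θ in Set.univ.pi fun _ : Fin (m + 1) => Set.Ico 0 T, Φ (fun i => θ i) =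
      T • ∫ θ in Set.univ.pi fun _ : Fin m => Set.Ico 0 T,
        Φ (fun i => (Fin.cons 0 θ : Fin (m + 1) → ℝ) i) := by
  have hcons : ∀ θ : Fin m → ℝ, (fun i => ((Fin.cons 0 θ : Fin (m + 1) → ℝ) i : AddCircle T)) =
      Fin.cons 0 fun i => (θ i : AddCircle T) := fun θ => by
    ext i
    cases i using Fin.cases <;> simp
  rw [setIntegral_pi_Ico_eq_integral_pi _ hΦ,
    integral_pi_succ_eq_smul_of_diag_invariant Φ hΦ hΦ_diag]
  simp only [hcons]
  exact congrArg (T • ·)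
    (setIntegral_pi_Ico_eq_integral_pi (fun v => Φ (Fin.cons 0 v)) (by fun_prop)).symm

theorem toCircle_coe_two_pi (x : ℝ) :
    (toCircle (x : AddCircle (2 * Real.pi)) : ℂ) = Complex.exp (Complex.I * x) := by
  rw [toCircle_apply_mk, div_self Real.two_pi_pos.ne', one_mul, Circle.coe_exp, mul_comm]

end AddCircle

theorem setIntegral_exp_sum_mul_exp_sub_eq_smul {m : ℕ}
    (c : Matrix (Fin (m + 1)) (Fin (m + 1)) ℂ) :
    ∫ θ in Set.univ.pi fun _ : Fin (m + 1) => Set.Ico 0 (2 * Real.pi),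
        Complex.exp (∑ i, ∑ j, c i j * Complex.exp (Complex.I * ((θ i : ℂ) - θ j))) =
      (2 * Real.pi : ℝ) • ∫ θ in Set.univ.pi fun _ : Fin m => Set.Ico 0 (2 * Real.pi),
        Complex.exp (∑ i, ∑ j, c i j * Complex.exp (Complex.I *
          (((Fin.cons 0 θ : Fin (m + 1) → ℝ) i : ℂ) - (Fin.cons 0 θ : Fin (m + 1) → ℝ) j))) := by
  have : Fact (0 < 2 * Real.pi) := ⟨Real.two_pi_pos⟩
  set Φ : (Fin (m + 1) → AddCircle (2 * Real.pi)) → ℂ := fun u =>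
    Complex.exp (∑ i, ∑ j, c i j * (AddCircle.toCircle (u i - u j) : ℂ))
  have hΦ : ∀ θ : Fin (m + 1) → ℝ, Φ (fun i => θ i) =
      Complex.exp (∑ i, ∑ j, c i j * Complex.exp (Complex.I * ((θ i : ℂ) - θ j))) := fun θ => by
    simp only [Φ, ← AddCircle.coe_sub, AddCircle.toCircle_coe_two_pi, Complex.ofReal_sub]
  simp only [← hΦ]
  exact AddCircle.setIntegral_pi_Ico_succ_eq_smul_of_diag_invariant Φ (by fun_prop) fun u a => by
    simp only [Φ, Pi.add_apply, add_sub_add_right_eq_sub]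

theorem permDensity_cons_eq {m : ℕ} (G Q : Matrix (Fin (m + 1)) (Fin (m + 1)) ℝ)
    (hQ : -G⁻¹ = Q) {w v : Fin m → ℝ}
    (hw : w ᵥ* Q.submatrix Fin.succ Fin.succ = fun j => Q 0 j.succ)
    (hv : Q.submatrix Fin.succ Fin.succ *ᵥ v = fun i => Q i.succ 0)
    {r : ℝ} (hr : 0 ≤ r) {ls : Fin m → ℝ} (hls : ∀ i, 0 ≤ ls i) :
    permDensity G (Fin.cons r ls) =
      (((2 * Real.pi)⁻¹ ^ m * G.det⁻¹ : ℝ) : ℂ) *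
        Complex.exp ((r * (Q 0 0 - w ⬝ᵥ fun i => Q i.succ 0) : ℝ) : ℂ) *
        ∫ θ in Set.univ.pi fun _ : Fin m => Set.Ico 0 (2 * Real.pi),
          Complex.exp (∑ i, (((Real.sqrt (ls i) : ℝ) : ℂ) * Complex.exp (Complex.I * (θ i : ℂ)) +
              ((Real.sqrt r * w i : ℝ) : ℂ)) *
            ∑ j, ((Q i.succ j.succ : ℝ) : ℂ) *
              (((Real.sqrt (ls j) : ℝ) : ℂ) * Complex.exp (-(Complex.I * (θ j : ℂ))) +
                ((Real.sqrt r * v j : ℝ) : ℂ))) := by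
  have hQij : ∀ i j, -(G⁻¹ i j) = Q i j := fun i j => by rw [← hQ]; rfl
  rw [permDensity, setIntegral_exp_sum_mul_exp_sub_eq_smul fun i j =>
    ((-(G⁻¹ i j) : ℝ) : ℂ) * ((Real.sqrt ((Fin.cons r ls : Fin (m + 1) → ℝ) i *
      (Fin.cons r ls : Fin (m + 1) → ℝ) j) : ℝ) : ℂ)]
  simp only [hQij, sum_sqrt_mul_exp_cons_eq Q hw hv hr hls, Complex.exp_add, integral_const_mul,
    Complex.real_smul]
  generalize (∫ θ in Set.univ.pi fun _ : Fin m => Set.Ico 0 (2 * Real.pi), (_ : ℂ)) = I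
  have h2pi : (2 * Real.pi)⁻¹ ^ (m + 1) * (2 * Real.pi) = (2 * Real.pi)⁻¹ ^ m := by
    rw [pow_succ, mul_assoc, inv_mul_cancel₀ Real.two_pi_pos.ne', mul_one]
  rw [← h2pi]
  push_cast
  ring

/-- **Density of a conditioned 1-permanental vector.** Let `G` be an
`(m+1) × (m+1)` real matrix with positive definite symmetric part, `Q := −G⁻¹`, decomposed in
block form over the first index `0` and the remaining indices `1,…,m`: scalar `Q₁₁ = Q 0 0`,
column `Q_{*1} i = Q i.succ 0`, row `Q_{1*} j = Q 0 j.succ`, block `Q_{**} i j = Q i.succ j.succ`.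
Then `Q_{**}` is invertible with `det(−Q_{**}) > 0`, `G₁₁ = det(G)·det(−Q_{**}) > 0`, and for
every `r > 0` and `(l₂,…,lₙ) ∈ ℝ₊ᵐ`, the conditional-density identity
`G₁₁ · e^{r/G₁₁} · ρ(r, l₂,…,lₙ) = (2π)^{−m} det(−Q_{**})
∫_{[0,2π)^m} exp ⟨φ_* + √r·Q_{**}^{−T}Q_{1*}, Q_{**}(φ̄_* + √r·Q_{**}^{−1}Q_{*1})⟩ dθ_*`
holds, where `φ_{*,i} = √(lᵢ)·e^{𝕚θᵢ}` and `⟨x,y⟩ = Σᵢ xᵢyᵢ` is the unconjugated pairing. -/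
theorem conditioned_permanental_density {m : ℕ} (G : Matrix (Fin (m + 1)) (Fin (m + 1)) ℝ)
    (hpd : ∀ x : Fin (m + 1) → ℝ, x ≠ 0 → 0 < x ⬝ᵥ G.mulVec x) :
    let Q : Matrix (Fin (m + 1)) (Fin (m + 1)) ℝ := -G⁻¹
    let Qss : Matrix (Fin m) (Fin m) ℝ := fun i j => Q i.succ j.succ
    let Qs1 : Fin m → ℝ := fun i => Q i.succ 0
    let Q1s : Fin m → ℝ := fun j => Q 0 j.succ
    IsUnit Qss.det ∧ 0 < (-Qss).det ∧
    G 0 0 = G.det * (-Qss).det ∧ 0 < G 0 0 ∧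
    (∀ r : ℝ, 0 < r → ∀ ls : Fin m → ℝ, (∀ i, 0 ≤ ls i) →
      ((G 0 0 : ℝ) : ℂ) * Complex.exp (((r / G 0 0 : ℝ) : ℂ)) *
          permDensity G (Fin.cons r ls) =
        ((((2 * Real.pi)⁻¹ : ℝ) ^ m : ℝ) : ℂ) * (((-Qss).det : ℝ) : ℂ) *
          ∫ θ : Fin m → ℝ in Set.univ.pi fun _ : Fin m => Set.Ico (0 : ℝ) (2 * Real.pi),
            Complex.exp (∑ i,
              (((Real.sqrt (ls i) : ℝ) : ℂ) * Complex.exp (Complex.I * ((θ i : ℝ) : ℂ)) +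
                  ((Real.sqrt r * ((Qss⁻¹)ᵀ.mulVec Q1s i) : ℝ) : ℂ)) *
              ∑ j, ((Qss i j : ℝ) : ℂ) *
                (((Real.sqrt (ls j) : ℝ) : ℂ) * Complex.exp (-(Complex.I * ((θ j : ℝ) : ℂ))) +
                  ((Real.sqrt r * (Qss⁻¹.mulVec Qs1 j) : ℝ) : ℂ)))) := by
  intro Q Qss Qs1 Q1s
  have hGdet : 0 < G.det := det_pos_of_forall_dotProduct_mulVec_pos hpd
  have hQss_neg : -Qss = G⁻¹.submatrix Fin.succ Fin.succ := by ext i j; exact neg_neg _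
  have hQss_pos : 0 < (-Qss).det := hQss_neg ▸ det_pos_of_forall_dotProduct_mulVec_pos
    (forall_dotProduct_submatrix_mulVec_pos (forall_dotProduct_nonsing_inv_mulVec_pos hpd)
      (Fin.succ_injective m))
  have hQss_unit : IsUnit Qss.det := isUnit_of_mul_isUnit_right (det_neg Qss ▸ hQss_pos.ne'.isUnit)
  have hG00 : G 0 0 = G.det * (-Qss).det :=
    hQss_neg ▸ apply_zero_zero_eq_det_mul_det_inv_submatrix hGdet.ne'
  have hG00_pos : 0 < G 0 0 := hG00 ▸ mul_pos hGdet hQss_pos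
  refine ⟨hQss_unit, hQss_pos, hG00, hG00_pos, fun r hr ls hls => ?_⟩
  have hw : ((Qss⁻¹)ᵀ *ᵥ Q1s) ᵥ* Qss = Q1s := by
    rw [mulVec_transpose, vecMul_vecMul, nonsing_inv_mul _ hQss_unit, vecMul_one]
  have hv : Qss *ᵥ (Qss⁻¹ *ᵥ Qs1) = Qs1 := by
    rw [mulVec_mulVec, mul_nonsing_inv _ hQss_unit, one_mulVec]
  have hschur : -(G 0 0) * (Q 0 0 - (Qss⁻¹)ᵀ *ᵥ Q1s ⬝ᵥ fun i => Q i.succ 0) = 1 :=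
    apply_zero_zero_mul_sub_dotProduct_eq_one (A := Q) (B := -G)
      (by rw [mul_neg, neg_mul, neg_neg, nonsing_inv_mul _ hGdet.ne'.isUnit]) hw
  have hκ : r * (Q 0 0 - (Qss⁻¹)ᵀ *ᵥ Q1s ⬝ᵥ fun i => Q i.succ 0) = -(r / G 0 0) := by
    field_simp
    linear_combination -hschur
  rw [permDensity_cons_eq G Q rfl hw hv hr.le hls, hκ]
  simp only [show ∀ i j, Qss i j = Q i.succ j.succ from fun _ _ => rfl]
  generalize (∫ θ in Set.univ.pi fun _ : Fin m => Set.Ico 0 (2 * Real.pi), (_ : ℂ)) = I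
  have : (G.det : ℂ) ≠ 0 := Complex.ofReal_ne_zero.2 hGdet.ne'
  have := Complex.exp_ne_zero ((r / G 0 0 : ℝ) : ℂ)
  rw [Complex.ofReal_neg, Complex.exp_neg, hG00]
  push_cast
  field_simp
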